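/- arXiv:1409.7904 — 7 statements merged into one kernel-verified Lean document; each statement's English description precedes it below -/
import Mathlib

section
/- A ring R is periodic if and only if for every a ∈ R there exists m ≥ 2 such that a - a^m is nilpotent. -/
/-!
If `a ^ m = a ^ n` with `m < n`, then `a ^ m * (1 - a ^ (n - m)) = 0`, so
`a - a ^ (n - m + 1) = a * (1 - a ^ (n - m))` is nilpotent.

Conversely, applied to `2` the hypothesis makes the nonzero integer `(2 - 2 ^ m) ^ k` vanish in `R`,
so `R` has positive characteristic. For any `a`, `(a ^ m - a) ^ k = 0` is a monic equation, so
`ℤ[a]` is a finitely generated torsion abelian group, hence finite, and the powers of `a` repeat.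
-/

/-- A ring is periodic if every element satisfies `a ^ m = a ^ n` for distinct `m, n`. -/
def IsPeriodicRing (R : Type*) [Ring R] : Prop :=
  ∀ a : R, ∃ m n : ℕ, m ≠ n ∧ a ^ m = a ^ n

open Polynomial

section

variable {R : Type*} [Ring R]

theorem isNilpotent_sub_pow_of_pow_eq_pow {a : R} {m n : ℕ} (hmn : m < n) (h : a ^ m = a ^ n) :
    IsNilpotent (a - a ^ (n - m + 1)) := by
  have hkill : a ^ m * (1 - a ^ (n - m)) = 0 := by
    rw [mul_sub, mul_one, ← pow_add, Nat.add_sub_cancel' hmn.le, h, sub_self]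
  have hcomm : Commute a (1 - a ^ (n - m)) :=
    (Commute.one_right a).sub_right ((Commute.refl a).pow_right _)
  refine ⟨m + 1, ?_⟩
  calc (a - a ^ (n - m + 1)) ^ (m + 1)
      = a ^ (m + 1) * (1 - a ^ (n - m)) ^ (m + 1) := by
        rw [← hcomm.mul_pow, mul_sub, mul_one, ← pow_succ']
    _ = a * (a ^ m * (1 - a ^ (n - m))) * (1 - a ^ (n - m)) ^ m := by
        simp only [pow_succ', mul_assoc]
    _ = 0 := by rw [hkill, mul_zero, zero_mul]

theorem ringChar_ne_zero_of_isNilpotent_intCast {n : ℤ} (hn : n ≠ 0) (h : IsNilpotent (n : R)) :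
    ringChar R ≠ 0 := by
  obtain ⟨k, hk⟩ := h
  intro hR
  have hdvd := (CharP.intCast_eq_zero_iff R (ringChar R) (n ^ k)).mp (by push_cast; exact hk)
  rw [hR, Nat.cast_zero, zero_dvd_iff] at hdvd
  exact pow_ne_zero k hn hdvd

theorem isIntegral_of_isNilpotent_sub_pow {A : Type*} [CommRing A] [Algebra A R] {a : R} {m : ℕ}
    (hm : 2 ≤ m) (h : IsNilpotent (a - a ^ m)) : IsIntegral A a := by
  obtain ⟨k, hk⟩ := h.neg
  have hdeg : degree (X : A[X]) < m := degree_X_le.trans_lt (by exact_mod_cast hm)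
  refine ⟨(X ^ m - X) ^ k, (monic_X_pow_sub hdeg).pow k, ?_⟩
  rw [← aeval_def]
  simpa using hk

theorem finite_adjoin_singleton_of_isIntegral (hR : ringChar R ≠ 0) {a : R}
    (ha : IsIntegral ℤ a) : Finite (Algebra.adjoin ℤ {a}) := by
  have : Module.Finite ℤ (Algebra.adjoin ℤ {a}) :=
    Module.Finite.iff_fg.mpr ha.fg_adjoin_singleton
  refine Module.finite_of_fg_torsion _ fun x ↦ ⟨⟨ringChar R, ?_⟩, ?_⟩
  · exact mem_nonZeroDivisors_of_ne_zero (by exact_mod_cast hR)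
  · ext
    simp

end

theorem isPeriodicRing_iff_sub_pow_nilpotent (R : Type*) [Ring R] :
    IsPeriodicRing R ↔ ∀ a : R, ∃ m : ℕ, 2 ≤ m ∧ IsNilpotent (a - a ^ m) := by
  refine ⟨fun H a ↦ ?_, fun H a ↦ ?_⟩
  · obtain ⟨m, n, hne, h⟩ := H a
    rcases hne.lt_or_gt with hmn | hnm
    · exact ⟨n - m + 1, by omega, isNilpotent_sub_pow_of_pow_eq_pow hmn h⟩
    · exact ⟨m - n + 1, by omega, isNilpotent_sub_pow_of_pow_eq_pow hnm h.symm⟩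
  · obtain ⟨m₂, hm₂, h₂⟩ := H 2
    have hR : ringChar R ≠ 0 := by
      refine ringChar_ne_zero_of_isNilpotent_intCast (n := 2 - 2 ^ m₂) ?_
        (by push_cast; exact h₂)
      have : (2 : ℤ) ^ 2 ≤ 2 ^ m₂ := pow_le_pow_right₀ (by norm_num) hm₂
      omega
    obtain ⟨m, hm, ha⟩ := H a
    have := finite_adjoin_singleton_of_isIntegral hR (isIntegral_of_isNilpotent_sub_pow hm ha)
    obtain ⟨p, q, hpq, hpow⟩ := Set.Finite.exists_lt_map_eq_of_forall_mem (f := (a ^ ·))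
      (pow_mem (Algebra.self_mem_adjoin_singleton ℤ a)) (Set.toFinite _)
    exact ⟨p, q, hpq.ne, hpow⟩
end

section
/- A ring R is periodic if and only if for any two elements a, b ∈ R there exists a single n ∈ ℕ with n ≥ 2 such that both a - a^n and b - b^n are nilpotent. -/
open Polynomial

section Monoid

variable {M : Type*} [Monoid M]

lemma exists_ne_pow_eq_pow_of_finite [Finite M] (a : M) :
    ∃ m n : ℕ, m ≠ n ∧ a ^ m = a ^ n :=
  Finite.exists_ne_map_eq_of_infinite (a ^ ·)

lemma exists_pow_eq_pow_add_of_exists_pow_eq_pow {a : M}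
    (h : ∃ m n : ℕ, m ≠ n ∧ a ^ m = a ^ n) :
    ∃ p d : ℕ, 0 < d ∧ a ^ p = a ^ (p + d) := by
  obtain ⟨m, n, hmn, h⟩ := h
  rcases hmn.lt_or_gt with hlt | hlt
  · exact ⟨m, n - m, by omega, by rwa [Nat.add_sub_cancel' hlt.le]⟩
  · exact ⟨n, m - n, by omega, by rw [Nat.add_sub_cancel' hlt.le, h]⟩

lemma pow_eq_pow_add_mul {a : M} {p d : ℕ} (h : a ^ p = a ^ (p + d)) (t : ℕ) :
    a ^ p = a ^ (p + d * t) := by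
  induction t with
  | zero => simp
  | succ t ih => rw [mul_add_one, ← add_assoc, pow_add, ← ih, ← pow_add, ← h]

end Monoid

lemma isNilpotent_sub_pow_of_pow_eq_pow_add {R : Type*} [Ring R] {a : R} {p d : ℕ}
    (h : a ^ p = a ^ (p + d)) (t : ℕ) : IsNilpotent (a - a ^ (d * t + 1)) := by
  set u := 1 - a ^ (d * t)
  have hu : a ^ p * u = 0 := by
    rw [mul_sub, mul_one, ← pow_add, ← pow_eq_pow_add_mul h, sub_self]
  refine ⟨p + 1, ?_⟩
  have hcomm : Commute a u := (Commute.one_right a).sub_right ((Commute.refl a).pow_right _)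
  calc (a - a ^ (d * t + 1)) ^ (p + 1) = (a * u) ^ (p + 1) := by
        rw [mul_sub, mul_one, ← pow_succ']
    _ = a * (a ^ p * u) * u ^ p := by
        rw [hcomm.mul_pow, pow_succ', pow_succ']; simp only [mul_assoc]
    _ = 0 := by rw [hu, mul_zero, zero_mul]

lemma isIntegral_of_isNilpotent_sub_pow_s2 {R A : Type*} [CommRing R] [Ring A] [Algebra R A]
    {x : A} {n : ℕ} (hn : 2 ≤ n) (hx : IsNilpotent (x - x ^ n)) : IsIntegral R x := by
  obtain ⟨k, hk⟩ := hx.neg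
  have hmonic : (X ^ n - X : R[X]).Monic :=
    monic_X_pow_sub (degree_X_le.trans_lt (by exact_mod_cast hn))
  refine ⟨(X ^ n - X) ^ k, hmonic.pow k, ?_⟩
  rw [← aeval_def, map_pow, map_sub, map_pow, aeval_X, ← hk, neg_sub]

lemma finite_adjoin_int_of_isIntegral_of_intCast_eq_zero {A : Type*} [Ring A] {c : ℤ}
    (hc : c ≠ 0) (hcA : (c : A) = 0) {x : A} (hx : IsIntegral ℤ x) :
    Finite (Algebra.adjoin ℤ {x}) := by
  have := Algebra.finite_adjoin_simple_of_isIntegral hx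
  refine Module.finite_of_fg_torsion _ fun y => ⟨⟨c, mem_nonZeroDivisors_of_ne_zero hc⟩, ?_⟩
  ext
  simp [zsmul_eq_mul, hcA]

lemma exists_intCast_eq_zero_of_isNilpotent_sub_pow {R : Type*} [Ring R] {n : ℕ} (hn : 2 ≤ n)
    (h : IsNilpotent ((2 : R) - 2 ^ n)) : ∃ c : ℤ, c ≠ 0 ∧ (c : R) = 0 := by
  obtain ⟨k, hk⟩ := h
  refine ⟨(2 - 2 ^ n) ^ k, pow_ne_zero _ ?_, by push_cast; exact hk⟩
  have : 2 ^ 2 ≤ (2 : ℤ) ^ n := pow_le_pow_right₀ (by norm_num) hn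
  linarith

theorem IsPeriodicRing.of_forall_isNilpotent_sub_pow {R : Type*} [Ring R]
    (h : ∀ a : R, ∃ n : ℕ, 2 ≤ n ∧ IsNilpotent (a - a ^ n)) : IsPeriodicRing R := by
  obtain ⟨n₂, hn₂, h₂⟩ := h 2
  obtain ⟨c, hc, hcR⟩ := exists_intCast_eq_zero_of_isNilpotent_sub_pow hn₂ h₂
  intro x
  obtain ⟨n, hn, hx⟩ := h x
  have := finite_adjoin_int_of_isIntegral_of_intCast_eq_zero hc hcR
    (isIntegral_of_isNilpotent_sub_pow_s2 hn hx)
  obtain ⟨m, k, hmk, heq⟩ :=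
    exists_ne_pow_eq_pow_of_finite (⟨x, Algebra.self_mem_adjoin_singleton ℤ x⟩ :
      Algebra.adjoin ℤ {x})
  exact ⟨m, k, hmk, congrArg Subtype.val heq⟩

theorem isPeriodicRing_iff_pair_nilpotent (R : Type*) [Ring R] :
    IsPeriodicRing R ↔
      ∀ a b : R, ∃ n : ℕ, 2 ≤ n ∧ IsNilpotent (a - a ^ n) ∧ IsNilpotent (b - b ^ n) := by
  constructor
  · intro h a b
    obtain ⟨p, d, hd, ha⟩ := exists_pow_eq_pow_add_of_exists_pow_eq_pow (h a)
    obtain ⟨q, e, he, hb⟩ := exists_pow_eq_pow_add_of_exists_pow_eq_pow (h b)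
    refine ⟨d * e + 1, by nlinarith, isNilpotent_sub_pow_of_pow_eq_pow_add ha e, ?_⟩
    simpa only [mul_comm e d] using isNilpotent_sub_pow_of_pow_eq_pow_add hb d
  · intro h
    exact .of_forall_isNilpotent_sub_pow fun a => (h a a).imp fun _ ⟨hn, ha, _⟩ => ⟨hn, ha⟩
end

section
/- If R is a periodic ring, then for every a ∈ R there exists a potent element p ∈ R and a nilpotent w ∈ R such that a = p + w and pw = wp. -/
/-- An element `p` is potent if `p = p ^ m` for some `m ≥ 2`. -/
def IsPotent {R : Type*} [Ring R] (p : R) : Prop :=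
  ∃ m : ℕ, 2 ≤ m ∧ p = p ^ m

/-!
If `a ^ m = a ^ (m + d)` with `d ≥ 1`, the powers of `a` are periodic with period `d` from `m` on,
so `e = a ^ s` is idempotent as soon as `s ≥ m` is a nonzero multiple of `d`. Then `a = a e + a (1 - e)`
splits `a` into the potent part `a e = a ^ (s + 1)`, which satisfies `(a e) ^ (s + 1) = a e`, and the
nilpotent part `a (1 - e)`, whose `(s + 1)`-st power is `a e (1 - e) = 0`; both are polynomials in `a`,
hence commute.
-/

section Monoid

variable {M : Type*} [Monoid M] {a : M}

theorem pow_add_mul_eq_pow_of_pow_add_eq {m d : ℕ} (h : a ^ (m + d) = a ^ m) (k : ℕ) {t : ℕ}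
    (ht : m ≤ t) : a ^ (t + k * d) = a ^ t := by
  have hm : a ^ (m + k * d) = a ^ m := by
    induction k with
    | zero => simp
    | succ k ih => rw [Nat.succ_mul, ← add_assoc, pow_add, ih, ← pow_add, h]
  obtain ⟨r, rfl⟩ := Nat.exists_eq_add_of_le ht
  rw [add_right_comm, pow_add, hm, pow_add]

theorem exists_isIdempotentElem_pow_of_pow_eq_pow {m n : ℕ} (hmn : m ≠ n) (h : a ^ m = a ^ n) :
    ∃ s ≠ 0, IsIdempotentElem (a ^ s) := by
  wlog hlt : m < n generalizing m n
  · exact this hmn.symm h.symm (by omega)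
  obtain ⟨d, rfl⟩ := Nat.exists_eq_add_of_lt hlt
  refine ⟨(m + 1) * (d + 1), by positivity, ?_⟩
  rw [IsIdempotentElem, ← pow_add]
  exact pow_add_mul_eq_pow_of_pow_add_eq h.symm (m + 1) (by nlinarith)

end Monoid

section Ring

variable {R : Type*} [Ring R] {a : R} {s : ℕ}

theorem isPotent_pow_succ_of_isIdempotentElem_pow (hs : s ≠ 0) (he : IsIdempotentElem (a ^ s)) :
    IsPotent (a ^ (s + 1)) := by
  refine ⟨s + 1, by omega, ?_⟩
  rw [pow_succ', (Commute.self_pow a s).mul_pow, he.pow_succ_eq, pow_succ', mul_assoc, he.eq]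

theorem isNilpotent_sub_pow_succ_of_isIdempotentElem_pow (he : IsIdempotentElem (a ^ s)) :
    IsNilpotent (a - a ^ (s + 1)) := by
  refine ⟨s + 1, ?_⟩
  have hw : a - a ^ (s + 1) = a * (1 - a ^ s) := by rw [mul_one_sub, pow_succ']
  have hcomm : Commute a (1 - a ^ s) := (Commute.one_right a).sub_right (Commute.self_pow a s)
  rw [hw, hcomm.mul_pow, he.one_sub.pow_succ_eq, pow_succ', mul_assoc,
    he.mul_one_sub_self, mul_zero]

end Ring

theorem periodic_potent_plus_nilpotent {R : Type*} [Ring R]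
    (hR : IsPeriodicRing R) (a : R) :
    ∃ p w : R, IsPotent p ∧ IsNilpotent w ∧ a = p + w ∧ p * w = w * p := by
  obtain ⟨m, n, hmn, h⟩ := hR a
  obtain ⟨s, hs, he⟩ := exists_isIdempotentElem_pow_of_pow_eq_pow hmn h
  exact ⟨a ^ (s + 1), a - a ^ (s + 1), isPotent_pow_succ_of_isIdempotentElem_pow hs he,
    isNilpotent_sub_pow_succ_of_isIdempotentElem_pow he, (add_sub_cancel _ _).symm,
    (Commute.pow_self a (s + 1)).sub_right (Commute.refl _)⟩
end

section
/- If R is a periodic ring, then the quotient R[[x]]/(x^n) of the power series ring by the ideal generated by x^n is periodic for every n ≥ 1. -/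
/-!
A periodic ring has nonzero characteristic `C`, read off from `2 ^ m = 2 ^ k`. If the constant
coefficient `a` of `f ∈ R⟦X⟧` satisfies `a ^ m = a ^ k` with `m < k`, then `X ∣ f ^ k - f ^ m`,
so the class `s` of `f` modulo `X ^ n` satisfies `(s ^ k - s ^ m) ^ n = 0`: it is a root of the
monic integer polynomial `(t ^ k - t ^ m) ^ n`. Hence `ℤ[s]` is a finitely generated abelian group
killed by `C`, so it is finite and the powers of `s` must repeat.
-/

theorem IsPeriodicRing.exists_intCast_eq_zero {R : Type*} [Ring R] (hR : IsPeriodicRing R) :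
    ∃ C : ℤ, C ≠ 0 ∧ (C : R) = 0 := by
  obtain ⟨m, n, hmn, h⟩ := hR 2
  refine ⟨2 ^ m - 2 ^ n, sub_ne_zero.2 fun h' => hmn ?_, by push_cast; rw [h, sub_self]⟩
  exact Nat.pow_right_injective le_rfl (by exact_mod_cast h')

open Polynomial in
theorem IsIntegral.of_isNilpotent_pow_sub_pow {R S : Type*} [CommRing R] [Ring S] [Algebra R S]
    {s : S} {m k : ℕ} (hmk : m ≠ k) (hs : IsNilpotent (s ^ k - s ^ m)) : IsIntegral R s := by
  wlog hlt : m < k generalizing m k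
  · exact this hmk.symm (by simpa using hs.neg) (by omega)
  nontriviality R
  obtain ⟨N, hN⟩ := hs
  refine ⟨(X ^ k - X ^ m) ^ N, (monic_X_pow_sub (by simpa using hlt)).pow N, ?_⟩
  simpa [← aeval_def] using hN

theorem IsIntegral.exists_pow_eq_pow_of_intCast_eq_zero {S : Type*} [Ring S] [Algebra ℤ S]
    {C : ℤ} (hC : C ≠ 0) (hCS : (C : S) = 0) {s : S} (hs : IsIntegral ℤ s) :
    ∃ m n : ℕ, m ≠ n ∧ s ^ m = s ^ n := by
  obtain rfl : ‹Algebra ℤ S› = Ring.toIntAlgebra S := Subsingleton.elim _ _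
  have : AddGroup.FG (Algebra.adjoin ℤ {s}) :=
    Module.Finite.iff_addGroup_fg.1 (Algebra.finite_adjoin_simple_of_isIntegral hs)
  have : Finite (Algebra.adjoin ℤ {s}) := Module.finite_of_fg_torsion _ fun a =>
    ⟨⟨C, mem_nonZeroDivisors_of_ne_zero hC⟩, Subtype.ext <| by simp [zsmul_eq_mul, hCS]⟩
  obtain ⟨m, n, hmn, h⟩ := Finite.exists_ne_map_eq_of_infinite fun i : ℕ =>
    (⟨s ^ i, pow_mem (Algebra.self_mem_adjoin_singleton ℤ s) i⟩ : Algebra.adjoin ℤ {s})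
  exact ⟨m, n, hmn, congrArg Subtype.val h⟩

open PowerSeries in
theorem PowerSeries.isNilpotent_mk'_span_X_pow {R : Type*} [Ring R] (n : ℕ) {f : R⟦X⟧}
    (hf : constantCoeff f = 0) :
    IsNilpotent ((TwoSidedIdeal.span {(X : R⟦X⟧) ^ n}).ringCon.mk' f) := by
  obtain ⟨g, rfl⟩ := X_dvd_iff.2 hf
  refine ⟨n, ?_⟩
  rw [← map_pow, (commute_X g).symm.mul_pow]
  exact Quotient.sound <| (TwoSidedIdeal.mem_iff _ _).1 <|
    TwoSidedIdeal.mul_mem_right _ _ _ (TwoSidedIdeal.subset_span rfl)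

theorem powerSeries_quot_periodic_general (R : Type*) [Ring R] (hR : IsPeriodicRing R)
    (n : ℕ) :
    IsPeriodicRing
      ((TwoSidedIdeal.span {(PowerSeries.X : PowerSeries R) ^ n}).ringCon.Quotient) := by
  set π := (TwoSidedIdeal.span {(PowerSeries.X : PowerSeries R) ^ n}).ringCon.mk'
  obtain ⟨C, hC, hCR⟩ := hR.exists_intCast_eq_zero
  have hCπ : (C : PowerSeries R) = 0 := by
    rw [← map_intCast (PowerSeries.C (R := R)), hCR, map_zero]
  intro s
  obtain ⟨f, rfl⟩ := RingCon.mk'_surjective _ s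
  obtain ⟨m, k, hmk, hf⟩ := hR (PowerSeries.constantCoeff f)
  refine IsIntegral.exists_pow_eq_pow_of_intCast_eq_zero hC
    (by rw [← map_intCast π, hCπ, map_zero]) ?_
  refine IsIntegral.of_isNilpotent_pow_sub_pow hmk ?_
  rw [← map_pow, ← map_pow, ← map_sub]
  exact PowerSeries.isNilpotent_mk'_span_X_pow n (by simp [hf])

theorem powerSeries_quot_periodic (R : Type*) [Ring R] (hR : IsPeriodicRing R)
    (n : ℕ) (hn : 1 ≤ n) :
    IsPeriodicRing
      ((TwoSidedIdeal.span {(PowerSeries.X : PowerSeries R) ^ n}).ringCon.Quotient) :=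
  powerSeries_quot_periodic_general R hR n
end

section
/- If R is a strongly periodic ring, then the set of nilpotent elements N(R) equals the prime radical P(R); in particular N(R) is an ideal of R. -/
/-- A two-sided ideal `P` is prime if it is proper and `aRb ⊆ P` implies `a ∈ P` or `b ∈ P`. -/
def TwoSidedIdeal.IsPrime {R : Type*} [Ring R] (P : TwoSidedIdeal R) : Prop :=
  (P : Set R) ≠ Set.univ ∧ ∀ a b : R, (∀ r : R, a * r * b ∈ P) → a ∈ P ∨ b ∈ P

/-- The prime radical `P(R)`: the intersection of all prime (two-sided) ideals of `R`. -/
def primeRadical (R : Type*) [Ring R] : TwoSidedIdeal R :=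
  sInf {P : TwoSidedIdeal R | P.IsPrime}

/-- A ring is strongly periodic if every element is the sum of a commuting potent element
and an element of the prime radical. -/
def StronglyPeriodicRing (R : Type*) [Ring R] : Prop :=
  ∀ a : R, ∃ p : R, IsPotent p ∧ a - p ∈ primeRadical R ∧ a * p = p * a

/-!
If `x` is nilpotent and `x - p ∈ P(R)` with `p` potent, then the image of `p` in `R ⧸ P(R)` is
both nilpotent and potent, hence zero, so `x ∈ P(R)`. Conversely, if `a` is not nilpotent, a
two-sided ideal maximal among those containing no power of `a` (Zorn) is prime, so `a ∉ P(R)`.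
-/

namespace TwoSidedIdeal

variable {R : Type*} [Ring R]

lemma exists_coe_eq_biUnion_of_isChain {c : Set (TwoSidedIdeal R)} (hc : IsChain (· ≤ ·) c)
    (hne : c.Nonempty) : ∃ J : TwoSidedIdeal R, (J : Set R) = ⋃ I ∈ c, (I : Set R) := by
  obtain ⟨I₀, hI₀⟩ := hne
  refine ⟨mk' (⋃ I ∈ c, (I : Set R)) (Set.mem_biUnion hI₀ I₀.zero_mem) ?_ ?_ ?_ ?_, coe_mk' ..⟩
    <;> simp only [Set.mem_iUnion₂, SetLike.mem_coe]
  · rintro x y ⟨I, hI, hx⟩ ⟨J, hJ, hy⟩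
    rcases hc.total hI hJ with hIJ | hJI
    · exact ⟨J, hJ, J.add_mem (hIJ hx) hy⟩
    · exact ⟨I, hI, I.add_mem hx (hJI hy)⟩
  · rintro x ⟨I, hI, hx⟩
    exact ⟨I, hI, I.neg_mem hx⟩
  · rintro x y ⟨I, hI, hy⟩
    exact ⟨I, hI, I.mul_mem_left x y hy⟩
  · rintro x y ⟨I, hI, hx⟩
    exact ⟨I, hI, I.mul_mem_right x y hx⟩

lemma mul_mem_of_mem_span_singleton {M : TwoSidedIdeal R} {x y : R} (h : ∀ r, x * r * y ∈ M)
    {s t : R} (hs : s ∈ span {x}) (ht : t ∈ span {y}) : s * t ∈ M := by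
  have hsy : ∀ s ∈ span {x}, ∀ r, s * r * y ∈ M := by
    intro s hs
    induction hs using span_induction with
    | mem _ hx => rw [Set.mem_singleton_iff.1 hx]; exact h
    | zero => simp [M.zero_mem]
    | add _ _ _ _ h₁ h₂ => intro r; rw [add_mul, add_mul]; exact M.add_mem (h₁ r) (h₂ r)
    | neg _ _ h₁ => intro r; rw [neg_mul, neg_mul]; exact M.neg_mem (h₁ r)
    | left_absorb a _ _ h₁ => intro r; rw [mul_assoc a, mul_assoc a]; exact M.mul_mem_left _ _ (h₁ r)
    | right_absorb b _ _ h₁ => intro r; rw [mul_assoc _ b]; exact h₁ (b * r)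
  induction ht using span_induction generalizing s with
  | mem _ hy => rw [Set.mem_singleton_iff.1 hy, ← mul_one s]; exact hsy s hs 1
  | zero => rw [mul_zero]; exact M.zero_mem
  | add _ _ _ _ h₁ h₂ => rw [mul_add]; exact M.add_mem (h₁ hs) (h₂ hs)
  | neg _ _ h₁ => rw [mul_neg]; exact M.neg_mem (h₁ hs)
  | left_absorb a _ _ h₁ => rw [← mul_assoc]; exact h₁ (mul_mem_right _ _ _ hs)
  | right_absorb b _ _ h₁ => rw [← mul_assoc]; exact M.mul_mem_right _ _ (h₁ hs)

lemma mul_mem_of_mem_sup_span_singleton {M : TwoSidedIdeal R} {x y : R}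
    (h : ∀ r, x * r * y ∈ M) {u v : R} (hu : u ∈ M ⊔ span {x}) (hv : v ∈ M ⊔ span {y}) :
    u * v ∈ M := by
  obtain ⟨m, hm, s, hs, rfl⟩ := mem_sup.1 hu
  obtain ⟨n, hn, t, ht, rfl⟩ := mem_sup.1 hv
  rw [add_mul, mul_add s]
  exact M.add_mem (M.mul_mem_right _ _ hm)
    (M.add_mem (M.mul_mem_left _ _ hn) (mul_mem_of_mem_span_singleton h hs ht))

lemma isPrime_of_maximal_forall_pow_not_mem {a : R} {M : TwoSidedIdeal R}
    (hM : Maximal (fun I : TwoSidedIdeal R ↦ ∀ n, a ^ n ∉ I) M) : M.IsPrime := by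
  refine ⟨fun htop ↦ hM.1 0 (by simp [← SetLike.mem_coe, htop]), fun x y hxy ↦ ?_⟩
  by_contra! hxy'
  have hgrow : ∀ z ∉ M, ∃ n, a ^ n ∈ M ⊔ span {z} := by
    intro z hz
    by_contra! h
    exact hz (hM.2 h le_sup_left (mem_sup_right (subset_span rfl)))
  obtain ⟨i, hi⟩ := hgrow x hxy'.1
  obtain ⟨j, hj⟩ := hgrow y hxy'.2
  exact hM.1 (i + j) (pow_add a i j ▸ mul_mem_of_mem_sup_span_singleton hxy hi hj)

theorem exists_isPrime_not_mem_of_not_isNilpotent {a : R} (ha : ¬IsNilpotent a) :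
    ∃ P : TwoSidedIdeal R, P.IsPrime ∧ a ∉ P := by
  let S : Set (TwoSidedIdeal R) := {I | ∀ n, a ^ n ∉ I}
  have hchain : ∀ c ⊆ S, IsChain (· ≤ ·) c → ∀ I ∈ c, ∃ J ∈ S, ∀ K ∈ c, K ≤ J := by
    intro c hcS hc I hI
    obtain ⟨J, hJ⟩ := exists_coe_eq_biUnion_of_isChain hc ⟨I, hI⟩
    refine ⟨J, fun n hn ↦ ?_, fun K hK x hx ↦ ?_⟩
    · rw [← SetLike.mem_coe, hJ, Set.mem_iUnion₂] at hn
      obtain ⟨K, hK, hnK⟩ := hn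
      exact hcS hK n hnK
    · rw [← SetLike.mem_coe, hJ]
      exact Set.mem_biUnion hK hx
  obtain ⟨M, -, hM⟩ := zorn_le_nonempty₀ S hchain ⊥ fun n hn ↦ ha ⟨n, (mem_bot R).1 hn⟩
  exact ⟨M, isPrime_of_maximal_forall_pow_not_mem hM, by simpa using hM.1 1⟩

end TwoSidedIdeal

theorem isNilpotent_of_mem_primeRadical {R : Type*} [Ring R] {a : R}
    (ha : a ∈ primeRadical R) : IsNilpotent a := by
  by_contra h
  obtain ⟨P, hP, haP⟩ := TwoSidedIdeal.exists_isPrime_not_mem_of_not_isNilpotent h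
  exact haP ((TwoSidedIdeal.mem_sInf R).1 ha P hP)

namespace IsPotent

variable {R : Type*} [Ring R] {p : R}

theorem eq_zero_of_isNilpotent (hp : IsPotent p) (hnil : IsNilpotent p) : p = 0 := by
  obtain ⟨m, hm, hpm⟩ := hp
  obtain ⟨n, hn⟩ := hnil
  have hper : ∀ k, p = p * p ^ ((m - 1) * k) := by
    intro k
    induction k with
    | zero => simp
    | succ k ih =>
      rw [mul_add, mul_one, pow_add, ← mul_assoc, ← ih, ← pow_succ', Nat.sub_add_cancel (by omega),
        ← hpm]
  rw [hper n, pow_eq_zero_of_le (Nat.le_mul_of_pos_left n (by omega)) hn, mul_zero]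

theorem map {S F : Type*} [Ring S] [FunLike F R S] [RingHomClass F R S] (hp : IsPotent p)
    (f : F) : IsPotent (f p) := by
  obtain ⟨m, hm, hpm⟩ := hp
  exact ⟨m, hm, by rw [← map_pow, ← hpm]⟩

theorem mem_of_isNilpotent_of_sub_mem (hp : IsPotent p) {I : TwoSidedIdeal R} {a : R}
    (ha : IsNilpotent a) (hap : a - p ∈ I) : a ∈ I := by
  have hfa : I.ringCon.mk' a = I.ringCon.mk' p := (RingCon.eq _).2 ((I.rel_iff a p).2 hap)
  have hfp : I.ringCon.mk' p = 0 := (hp.map _).eq_zero_of_isNilpotent (hfa ▸ ha.map _)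
  rw [← I.ker_ringCon_mk', TwoSidedIdeal.mem_ker, hfa, hfp]

end IsPotent

theorem stronglyPeriodic_nilpotents_eq_primeRadical (R : Type*) [Ring R]
    (hR : StronglyPeriodicRing R) :
    {x : R | IsNilpotent x} = (primeRadical R : Set R) ∧
      ∃ I : TwoSidedIdeal R, (I : Set R) = {x : R | IsNilpotent x} := by
  have h : {x : R | IsNilpotent x} = (primeRadical R : Set R) := by
    ext x
    refine ⟨fun hx ↦ ?_, isNilpotent_of_mem_primeRadical⟩
    obtain ⟨p, hp, hxp, -⟩ := hR x
    exact hp.mem_of_isNilpotent_of_sub_mem hx hxp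
  exact ⟨h, primeRadical R, h.symm⟩
end

section
/- Every generalized n-like ring R (a ring satisfying (ab)^n - ab^n - a^n b + ab = 0 for all a, b ∈ R, for a fixed n ≥ 2) is periodic; in fact, for every a ∈ R, (a - a^n)^2 = 0. -/
def IsGeneralizedNLike (R : Type*) [Ring R] (n : ℕ) : Prop :=
  ∀ a b : R, (a * b) ^ n - a * b ^ n - a ^ n * b + a * b = 0

theorem Commute.add_pow_succ_of_sq_eq_zero {R : Type*} [Ring R] {a x : R} (hc : Commute a x)
    (hx : x ^ 2 = 0) (m : ℕ) : (a + x) ^ (m + 1) = a ^ (m + 1) + (m + 1) • (a ^ m * x) := by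
  induction m with
  | zero => simp
  | succ m ih =>
    rw [pow_succ, ih, add_mul, mul_add, mul_add, smul_mul_assoc, smul_mul_assoc,
      mul_assoc (a ^ m) x x, ← sq x, hx, mul_zero, smul_zero, add_zero, mul_assoc, ← hc.eq,
      ← mul_assoc, ← pow_succ, ← pow_succ, succ_nsmul _ (m + 1)]
    abel

section

variable {R : Type*} [Ring R]

theorem pow_mul_eq_pow_of_sub_pow_sq_eq_zero {a : R} {n k : ℕ} (hsq : (a - a ^ n) ^ 2 = 0)
    (hk : (k : R) * (a - a ^ n) = 0) : a ^ (n * k) = a ^ k := by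
  rcases k with _ | m
  · simp
  have hc : Commute (a ^ n) (a - a ^ n) := (Commute.pow_self a n).sub_right (Commute.refl _)
  calc a ^ (n * (m + 1)) = (a ^ n) ^ (m + 1) + (m + 1) • ((a ^ n) ^ m * (a - a ^ n)) := by
        rw [← mul_smul_comm, nsmul_eq_mul, hk, mul_zero, add_zero, pow_mul]
    _ = a ^ (m + 1) := by rw [← hc.add_pow_succ_of_sq_eq_zero hsq, add_sub_cancel]

namespace IsGeneralizedNLike

variable {n : ℕ}

theorem sub_pow_sq_eq_zero (h : IsGeneralizedNLike R n) (a : R) : (a - a ^ n) ^ 2 = 0 := by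
  rw [← h a a, (Commute.refl a).mul_pow]
  noncomm_ring

theorem two_pow_sub_two_mul_sub_pow_eq_zero (h : IsGeneralizedNLike R n) (a : R) :
    ((2 : R) ^ n - 2) * (a - a ^ n) = 0 := by
  rw [← neg_eq_zero, ← h 2 a, (Commute.ofNat_left 2 a).mul_pow]
  noncomm_ring

theorem isPeriodicRing (h : IsGeneralizedNLike R n) (hn : 2 ≤ n) : IsPeriodicRing R := by
  have h2 : 2 < 2 ^ n := by simpa using Nat.pow_lt_pow_right one_lt_two hn
  have hk : ((2 ^ n - 2 : ℕ) : R) = 2 ^ n - 2 := by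
    rw [Nat.cast_sub h2.le, Nat.cast_pow, Nat.cast_ofNat]
  intro a
  refine ⟨n * (2 ^ n - 2), 2 ^ n - 2, (lt_mul_left (by omega) hn).ne',
    pow_mul_eq_pow_of_sub_pow_sq_eq_zero (h.sub_pow_sq_eq_zero a) ?_⟩
  rw [hk, h.two_pow_sub_two_mul_sub_pow_eq_zero]

end IsGeneralizedNLike

end

theorem generalized_n_like_periodic (R : Type*) [Ring R] (n : ℕ) (hn : 2 ≤ n)
    (h : ∀ a b : R, (a * b) ^ n - a * b ^ n - a ^ n * b + a * b = 0) :
    (∀ a : R, (a - a ^ n) ^ 2 = 0) ∧ IsPeriodicRing R :=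
  ⟨IsGeneralizedNLike.sub_pow_sq_eq_zero h, IsGeneralizedNLike.isPeriodicRing h hn⟩
end

section
/- A ring R is J-clean (every element is the sum of an idempotent and an element of J(R)) if and only if R is J-clean-like and J(R) = { x ∈ R : 1 - x is a unit }. -/
/-- `x` lies in the Jacobson radical `J(R)` iff `1 - x * y` is a unit for every `y`. -/
def InJacobson {R : Type*} [Ring R] (x : R) : Prop :=
  ∀ y : R, IsUnit (1 - x * y)

/-- A ring is J-clean-like if every element is the sum of a potent element and an element
of the Jacobson radical. -/
def JCleanLikeRing (R : Type*) [Ring R] : Prop :=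
  ∀ a : R, ∃ p : R, IsPotent p ∧ InJacobson (a - p)

/-- A ring is J-clean if every element is the sum of an idempotent and an element of the
Jacobson radical. -/
def JCleanRing (R : Type*) [Ring R] : Prop :=
  ∀ a : R, ∃ e : R, IsIdempotentElem e ∧ InJacobson (a - e)

namespace InJacobson

variable {R : Type*} [Ring R] {x z : R}

theorem isUnit_one_sub (hx : InJacobson x) : IsUnit (1 - x) := by
  simpa using hx 1

theorem mul_right (hx : InJacobson x) (y : R) : InJacobson (x * y) := fun w => by
  simpa [mul_assoc] using hx (y * w)

theorem isUnit_sub {u : R} (hx : InJacobson x) (hu : IsUnit u) : IsUnit (u - x) := by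
  obtain ⟨u, rfl⟩ := hu
  have h : (1 - x * ↑u⁻¹) * (u : R) = u - x := by
    rw [sub_mul, one_mul, mul_assoc, Units.inv_mul, mul_one]
  exact h ▸ (hx ↑u⁻¹).mul u.isUnit

theorem neg (hx : InJacobson x) : InJacobson (-x) := fun y => by
  simpa using hx (-y)

theorem add (hx : InJacobson x) (hz : InJacobson z) : InJacobson (x + z) := fun y => by
  rw [add_mul, ← sub_sub]
  exact (hz.mul_right y).isUnit_sub (hx y)

theorem sub (hx : InJacobson x) (hz : InJacobson z) : InJacobson (x - z) := by
  simpa only [sub_eq_add_neg] using hx.add hz.neg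

end InJacobson

theorem IsIdempotentElem.isPotent {R : Type*} [Ring R] {e : R} (he : IsIdempotentElem e) :
    IsPotent e :=
  ⟨2, le_rfl, by rw [sq, he.eq]⟩

theorem IsIdempotentElem.add_pow_succ_of_mul_eq_zero {R : Type*} [Ring R] {f p : R}
    (hf : IsIdempotentElem f) (hfp : f * p = 0) (hpf : p * f = 0) (n : ℕ) :
    (f + p) ^ (n + 1) = f + p ^ (n + 1) := by
  induction n with
  | zero => simp
  | succ n ih =>
    have hpnf : p ^ (n + 1) * f = 0 := by rw [pow_succ, mul_assoc, hpf, mul_zero]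
    rw [pow_succ, ih, add_mul, mul_add, mul_add, hf.eq, hfp, hpnf, ← pow_succ, add_zero,
      zero_add]

theorem IsPotent.exists_isIdempotentElem_isUnit_one_sub {R : Type*} [Ring R] {p : R}
    (hp : IsPotent p) : ∃ e : R, IsIdempotentElem e ∧ IsUnit (1 - (e - p)) := by
  obtain ⟨m, hm, hpm⟩ := hp
  obtain ⟨k, rfl⟩ := Nat.exists_eq_add_of_le' hm
  have hpe : p * p ^ (k + 1) = p := by rw [← pow_succ', ← hpm]
  have hep : p ^ (k + 1) * p = p := by rw [← pow_succ, ← hpm]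
  have he : IsIdempotentElem (p ^ (k + 1)) := by
    rw [IsIdempotentElem]
    nth_rw 1 [pow_succ p k]
    rw [mul_assoc, hpe, ← pow_succ]
  have hfp : (1 - p ^ (k + 1)) * p = 0 := by rw [sub_mul, one_mul, hep, sub_self]
  have hpf : p * (1 - p ^ (k + 1)) = 0 := by rw [mul_sub, mul_one, hpe, sub_self]
  refine ⟨p ^ (k + 1), he, IsUnit.of_pow_eq_one (n := k + 1) ?_ k.succ_ne_zero⟩
  rw [sub_sub_eq_add_sub, add_sub_right_comm, he.one_sub.add_pow_succ_of_mul_eq_zero hfp hpf,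
    sub_add_cancel]

namespace JCleanRing

variable {R : Type*} [Ring R]

theorem jCleanLikeRing (hR : JCleanRing R) : JCleanLikeRing R := fun a => by
  obtain ⟨e, he, hae⟩ := hR a
  exact ⟨e, he.isPotent, hae⟩

theorem inJacobson_of_isUnit_one_sub (hR : JCleanRing R) {x : R} (hx : IsUnit (1 - x)) :
    InJacobson x := by
  obtain ⟨e, he, hxe⟩ := hR x
  have hunit : IsUnit (1 - e) := by
    simpa only [neg_sub, sub_sub_sub_cancel_right] using hxe.neg.isUnit_sub hx
  have he0 : e = 0 := sub_eq_self.mp ((IsIdempotentElem.iff_eq_one_of_isUnit hunit).mp he.one_sub)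
  rwa [he0, sub_zero] at hxe

end JCleanRing

theorem jClean_iff_jCleanLike (R : Type*) [Ring R] :
    JCleanRing R ↔
      (JCleanLikeRing R ∧ {x : R | InJacobson x} = {x : R | IsUnit (1 - x)}) := by
  constructor
  · intro hR
    exact ⟨hR.jCleanLikeRing, Set.ext fun x =>
      ⟨InJacobson.isUnit_one_sub, hR.inJacobson_of_isUnit_one_sub⟩⟩
  · rintro ⟨hR, hJ⟩ a
    obtain ⟨p, hp, hap⟩ := hR a
    obtain ⟨e, he, hunit⟩ := hp.exists_isIdempotentElem_isUnit_one_sub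
    have hep : InJacobson (e - p) := hJ.symm.subset hunit
    exact ⟨e, he, by simpa only [sub_sub_sub_cancel_right] using hap.sub hep⟩
end
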